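/- Let q be a power of an odd prime, n > 4, and B in SL_2(F_q). For each a in F_q, the map sending (a, 0, a_3, a_4, ..., a_n) to (a + a_3, a_4, ..., a_n) is a bijection from the set of n-tuples in F_q^n with first coordinate a, second coordinate 0, and M_n product equal to B, onto the set of (n-2)-tuples with M_{n-2} product equal to -B. Consequently the number of n-tuples with a_2 = 0 and M_n(a_1,...,a_n) = B equals q times the number of (n-2)-tuples with M_{n-2}(b_1,...,b_{n-2}) = -B. -/

import Mathlib

/-! Since `mat y * mat 0 * mat x = -mat (x + y)`, a word `(a, 0, y, u₁, …)` has product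
`-M (a + y, u₁, …)`. So for fixed `a`, replacing `(a, 0, y)` by `a + y` is a bijection onto the
words with product `-B`, with inverse `w ↦ (a, 0, w₀ - a, w₁, …)`; the first letter `a` is free,
which gives the factor `q`. -/

def mat {A : Type*} [CommRing A] (a : A) : Matrix (Fin 2) (Fin 2) A := !![a, -1; 1, 0]

def M {A : Type*} [CommRing A] {n : ℕ} (a : Fin n → A) : Matrix (Fin 2) (Fin 2) A :=
  ((List.ofFn a).map mat).reverse.prod

theorem Nat.card_subtype_eq_mul_of_equiv_fiber {α ι T : Type*} (g : α → ι) (P : α → Prop)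
    (e : ∀ i, {x // g x = i ∧ P x} ≃ T) : Nat.card {x // P x} = Nat.card ι * Nat.card T := by
  rw [← Nat.card_prod]
  refine Nat.card_congr <| (Equiv.sigmaFiberEquiv fun x : {x // P x} => g x).symm.trans <|
    (Equiv.sigmaCongrRight fun i => ?_).trans (Equiv.sigmaEquivProd ι T)
  exact (Equiv.subtypeSubtypeEquivSubtypeInter P (g · = i)).trans
    ((Equiv.subtypeEquivRight fun _ => and_comm).trans (e i))

section

variable {A : Type*} [CommRing A] {n : ℕ}

lemma M_cons (x : A) (a : Fin n → A) : M (Fin.cons x a : Fin (n + 1) → A) = M a * mat x := by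
  simp [M, List.ofFn_succ]

lemma mat_mul_mat_zero_mul_mat (x y : A) : mat y * mat 0 * mat x = -mat (x + y) := by
  ext i j
  fin_cases i <;> fin_cases j <;> simp [mat, Matrix.mul_apply, Fin.sum_univ_succ]; ring

lemma M_cons_zero_cons (x y : A) (a : Fin n → A) :
    M (Fin.cons x (Fin.cons 0 (Fin.cons y a)) : Fin (n + 3) → A) =
      -M (Fin.cons (x + y) a : Fin (n + 1) → A) := by
  simp only [M_cons, mul_assoc]
  rw [← mul_assoc (mat y), mat_mul_mat_zero_mul_mat, mul_neg]

def collapse (a : A) (v : Fin (n + 3) → A) : Fin (n + 1) → A :=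
  fun j => if (j : ℕ) = 0 then a + v ⟨2, by omega⟩ else v ⟨j + 2, by omega⟩

lemma collapse_cons_zero_cons (a y : A) (u : Fin n → A) :
    collapse a (Fin.cons a (Fin.cons 0 (Fin.cons y u))) = Fin.cons (a + y) u := by
  funext j
  rcases j with ⟨_ | j, hj⟩ <;> rfl

lemma eq_cons_zero_cons {a : A} {v : Fin (n + 3) → A} (h0 : v 0 = a) (h1 : v 1 = 0) :
    v = Fin.cons a (Fin.cons 0 (Fin.cons (v 2) fun j => v j.succ.succ.succ)) := by
  subst h0
  funext i
  rcases i with ⟨_ | _ | _ | i, hi⟩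
  exacts [rfl, h1, rfl, rfl]

def expand (a : A) (w : Fin (n + 1) → A) : Fin (n + 3) → A :=
  Fin.cons a (Fin.cons 0 (Fin.cons (w 0 - a) (Fin.tail w)))

lemma collapse_expand (a : A) (w : Fin (n + 1) → A) : collapse a (expand a w) = w := by
  rw [expand, collapse_cons_zero_cons, add_sub_cancel, Fin.cons_self_tail]

theorem bijOn_collapse (a : A) (B : Matrix (Fin 2) (Fin 2) A) :
    Set.BijOn (collapse a) {v : Fin (n + 3) → A | v 0 = a ∧ v 1 = 0 ∧ M v = B}
      {w | M w = -B} := by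
  refine Set.InvOn.bijOn ⟨?_, fun w _ => collapse_expand a w⟩ ?_ ?_ (f' := expand a)
  · rintro v ⟨h0, h1, -⟩
    rw [eq_cons_zero_cons h0 h1, collapse_cons_zero_cons, expand, Fin.cons_zero, Fin.tail_cons,
      add_sub_cancel_left]
  · rintro v ⟨h0, h1, hv⟩
    rw [Set.mem_ofPred_eq, ← hv, eq_cons_zero_cons h0 h1, collapse_cons_zero_cons,
      M_cons_zero_cons, neg_neg]
  · intro w hw
    refine ⟨rfl, rfl, ?_⟩
    rw [expand, M_cons_zero_cons, add_sub_cancel, Fin.cons_self_tail, hw, neg_neg]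

end

theorem stmt13 {F : Type*} [Field F] [Fintype F]
    (B : Matrix (Fin 2) (Fin 2) F) (n : ℕ) (hn : 4 < n) :
    (∀ a : F,
      Set.BijOn
        (fun (v : Fin n → F) (j : Fin (n - 2)) =>
          if (j : ℕ) = 0 then a + v ⟨2, by omega⟩
          else v ⟨(j : ℕ) + 2, by have := j.isLt; omega⟩)
        {v : Fin n → F | v ⟨0, by omega⟩ = a ∧ v ⟨1, by omega⟩ = 0 ∧ M v = B}
        {w : Fin (n - 2) → F | M w = -B}) ∧
    Nat.card {v : Fin n → F // v ⟨1, by omega⟩ = 0 ∧ M v = B} =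
      Fintype.card F * Nat.card {w : Fin (n - 2) → F // M w = -B} := by
  obtain ⟨m, rfl⟩ : ∃ m, n = m + 3 := ⟨n - 3, by omega⟩
  have hbij (a : F) := bijOn_collapse (n := m) a B
  refine ⟨hbij, ?_⟩
  rw [← Nat.card_eq_fintype_card]
  exact Nat.card_subtype_eq_mul_of_equiv_fiber (fun v : Fin (m + 3) → F => v 0) _
    fun a => (hbij a).equiv
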